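/- arXiv:nlin/0201018 — 2 statements merged into one kernel-verified Lean document; each statement's English description precedes it below -/
import Mathlib

section
/- With l(t) = ω_L t and g(t) = ω_G t where ω_L(L,G) = (G+L)/((−G+√((G+L)²−2b))³ √((G+L)²−2b)) and ω_G(L,G) = (G+L−√((G+L)²−2b))/((−G+√((G+L)²−2b))³ √((G+L)²−2b)), the functional determinant D = det [[∂l/∂L, ∂l/∂G],[∂g/∂L, ∂g/∂G]] evaluated at time t = τ/2 equals D = 6b(τ/2)²/((−G+√((G+L)²−2b))⁷((G+L)²−2b)^{3/2}), which is nonzero whenever b > 0, τ > 0, (G+L)² > 2b, and −G + √((G+L)²−2b) > 0. -/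
/-- The Manev frequency `ω_L(L,G)`. -/
noncomputable def omegaL (b L G : ℝ) : ℝ :=
  (G + L) / ((-G + Real.sqrt ((G + L) ^ 2 - 2 * b)) ^ 3
    * Real.sqrt ((G + L) ^ 2 - 2 * b))

/-- The Manev frequency `ω_G(L,G)`. -/
noncomputable def omegaG (b L G : ℝ) : ℝ :=
  (G + L - Real.sqrt ((G + L) ^ 2 - 2 * b))
    / ((-G + Real.sqrt ((G + L) ^ 2 - 2 * b)) ^ 3
      * Real.sqrt ((G + L) ^ 2 - 2 * b))

/-!
Write `t = τ / 2`, `x = G + L`, `s = √(x² - 2b)` and `u = -G + s`. Both frequencies have the form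
`ψ(x) / u³` with `ψ₁ = x / s` and `ψ₂ = (x - s) / s = ψ₁ - 1`. Since `x` and `s` depend on
`(L, G)` only through `x`, the operator `∂_G - ∂_L` only sees the `-G` in `u`, so
`∂_G ω = ∂_L ω + 3 ψ / u⁴` for both frequencies. Subtracting the first column of the Jacobian from
the second reduces its determinant to `3 t² (ψ₁' ψ₂ - ψ₁ ψ₂') / u⁷ = -3 t² ψ₁' / u⁷`, and
`ψ₁' = (s² - x²) / s³ = -2b / s³`.
-/

open Real

lemma hasDerivAt_sqrt_sq_sub {c x : ℝ} (hx : c < x ^ 2) :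
    HasDerivAt (fun y => √(y ^ 2 - c)) (x / √(x ^ 2 - c)) x := by
  have hpos : 0 < x ^ 2 - c := by linarith
  refine (((hasDerivAt_pow 2 x).sub_const c).sqrt hpos.ne').congr_deriv ?_
  field_simp
  ring

lemma hasDerivAt_div_sqrt_sq_sub {c x : ℝ} (hx : c < x ^ 2) :
    HasDerivAt (fun y => y / √(y ^ 2 - c)) (-c / √(x ^ 2 - c) ^ 3) x := by
  have hpos : 0 < x ^ 2 - c := by linarith
  have hs : 0 < √(x ^ 2 - c) := sqrt_pos.mpr hpos
  refine ((hasDerivAt_id' x).fun_div (hasDerivAt_sqrt_sq_sub hx) hs.ne').congr_deriv ?_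
  field_simp
  rw [sq_sqrt hpos.le]
  ring

lemma hasDerivAt_sub_sqrt_div_sqrt_sq_sub {c x : ℝ} (hx : c < x ^ 2) :
    HasDerivAt (fun y => (y - √(y ^ 2 - c)) / √(y ^ 2 - c)) (-c / √(x ^ 2 - c) ^ 3) x := by
  have hpos : 0 < x ^ 2 - c := by linarith
  have hs : 0 < √(x ^ 2 - c) := sqrt_pos.mpr hpos
  have hS := hasDerivAt_sqrt_sq_sub hx
  refine (((hasDerivAt_id' x).fun_sub hS).fun_div hS hs.ne').congr_deriv ?_
  field_simp
  linear_combination sq_sqrt hpos.le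

lemma HasDerivAt.div_pow {f g : ℝ → ℝ} {f' g' x : ℝ} (n : ℕ) (hf : HasDerivAt f f' x)
    (hg : HasDerivAt g g' x) (hgx : g x ≠ 0) :
    HasDerivAt (fun y => f y / g y ^ n) ((f' * g x - n * f x * g') / g x ^ (n + 1)) x := by
  refine (hf.fun_div (hg.fun_pow n) (pow_ne_zero n hgx)).congr_deriv ?_
  rcases n with _ | n
  · simp [hgx]
  · rw [Nat.add_sub_cancel]
    field_simp
    ring

lemma sqrt_pow_three {x : ℝ} (hx : 0 ≤ x) : √x ^ 3 = x ^ ((3 : ℝ) / 2) := by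
  rw [sqrt_eq_rpow, ← rpow_mul_natCast hx]
  norm_num

section ShiftedQuotient

variable {ψ₁ ψ₂ S : ℝ → ℝ} {ψ₁' ψ₂' S' L G : ℝ} (n : ℕ)

lemma hasDerivAt_div_pow_neg_add_wrt_L (hψ : HasDerivAt ψ₁ ψ₁' (G + L))
    (hS : HasDerivAt S S' (G + L)) (hu : -G + S (G + L) ≠ 0) :
    HasDerivAt (fun L' => ψ₁ (G + L') / (-G + S (G + L')) ^ n)
      ((ψ₁' * (-G + S (G + L)) - n * ψ₁ (G + L) * S') / (-G + S (G + L)) ^ (n + 1)) L :=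
  (hψ.comp_const_add G L).div_pow n ((hS.comp_const_add G L).const_add (-G)) hu

lemma hasDerivAt_div_pow_neg_add_wrt_G (hψ : HasDerivAt ψ₁ ψ₁' (G + L))
    (hS : HasDerivAt S S' (G + L)) (hu : -G + S (G + L) ≠ 0) :
    HasDerivAt (fun G' => ψ₁ (G' + L) / (-G' + S (G' + L)) ^ n)
      ((ψ₁' * (-G + S (G + L)) - n * ψ₁ (G + L) * (-1 + S')) / (-G + S (G + L)) ^ (n + 1)) G :=
  (hψ.comp_add_const G L).div_pow n ((hasDerivAt_id' G).neg.add (hS.comp_add_const G L)) hu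

theorem jacobian_det_div_pow_neg_add (t : ℝ) (hψ₁ : HasDerivAt ψ₁ ψ₁' (G + L))
    (hψ₂ : HasDerivAt ψ₂ ψ₂' (G + L)) (hS : HasDerivAt S S' (G + L))
    (hu : -G + S (G + L) ≠ 0) {a₁₁ a₁₂ a₂₁ a₂₂ : ℝ}
    (h₁₁ : HasDerivAt (fun L' => t * (ψ₁ (G + L') / (-G + S (G + L')) ^ n)) a₁₁ L)
    (h₁₂ : HasDerivAt (fun G' => t * (ψ₁ (G' + L) / (-G' + S (G' + L)) ^ n)) a₁₂ G)
    (h₂₁ : HasDerivAt (fun L' => t * (ψ₂ (G + L') / (-G + S (G + L')) ^ n)) a₂₁ L)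
    (h₂₂ : HasDerivAt (fun G' => t * (ψ₂ (G' + L) / (-G' + S (G' + L)) ^ n)) a₂₂ G) :
    a₁₁ * a₂₂ - a₁₂ * a₂₁ = n * t ^ 2 * (ψ₁' * ψ₂ (G + L) - ψ₁ (G + L) * ψ₂')
      / (-G + S (G + L)) ^ (2 * n + 1) := by
  rw [h₁₁.unique ((hasDerivAt_div_pow_neg_add_wrt_L n hψ₁ hS hu).const_mul t),
    h₁₂.unique ((hasDerivAt_div_pow_neg_add_wrt_G n hψ₁ hS hu).const_mul t),
    h₂₁.unique ((hasDerivAt_div_pow_neg_add_wrt_L n hψ₂ hS hu).const_mul t),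
    h₂₂.unique ((hasDerivAt_div_pow_neg_add_wrt_G n hψ₂ hS hu).const_mul t)]
  field_simp
  ring

end ShiftedQuotient

lemma omegaL_eq (b L G : ℝ) :
    omegaL b L G = (G + L) / √((G + L) ^ 2 - 2 * b) / (-G + √((G + L) ^ 2 - 2 * b)) ^ 3 :=
  div_mul_eq_div_div_swap _ _ _

lemma omegaG_eq (b L G : ℝ) :
    omegaG b L G = (G + L - √((G + L) ^ 2 - 2 * b)) / √((G + L) ^ 2 - 2 * b)
      / (-G + √((G + L) ^ 2 - 2 * b)) ^ 3 :=
  div_mul_eq_div_div_swap _ _ _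

theorem manev_functional_determinant_general (b L G τ : ℝ) (hb : 0 < b) (hτ : 0 < τ)
    (h1 : (G + L) ^ 2 > 2 * b)
    (h2 : 0 < -G + Real.sqrt ((G + L) ^ 2 - 2 * b))
    (a11 a12 a21 a22 : ℝ)
    (h11 : HasDerivAt (fun L' => (τ / 2) * omegaL b L' G) a11 L)
    (h12 : HasDerivAt (fun G' => (τ / 2) * omegaL b L G') a12 G)
    (h21 : HasDerivAt (fun L' => (τ / 2) * omegaG b L' G) a21 L)
    (h22 : HasDerivAt (fun G' => (τ / 2) * omegaG b L G') a22 G) :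
    a11 * a22 - a12 * a21
      = 6 * b * (τ / 2) ^ 2
        / ((-G + Real.sqrt ((G + L) ^ 2 - 2 * b)) ^ 7
          * ((G + L) ^ 2 - 2 * b) ^ ((3 : ℝ) / 2)) ∧
    a11 * a22 - a12 * a21 ≠ 0 := by
  simp only [omegaL_eq, omegaG_eq] at h11 h12 h21 h22
  have hs : 0 < √((G + L) ^ 2 - 2 * b) := sqrt_pos.mpr (by linarith)
  have hdet := jacobian_det_div_pow_neg_add 3 (τ / 2) (hasDerivAt_div_sqrt_sq_sub h1)
    (hasDerivAt_sub_sqrt_div_sqrt_sq_sub h1) (hasDerivAt_sqrt_sq_sub h1) h2.ne' h11 h12 h21 h22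
  have hformula : a11 * a22 - a12 * a21 = 6 * b * (τ / 2) ^ 2
      / ((-G + √((G + L) ^ 2 - 2 * b)) ^ 7 * √((G + L) ^ 2 - 2 * b) ^ 3) := by
    rw [hdet]
    field_simp
    ring
  rw [hformula, sqrt_pow_three (by linarith)]
  exact ⟨rfl, by positivity⟩

/-- The functional determinant of `(l,g) = ((τ/2)·ω_L, (τ/2)·ω_G)` with respect to
`(L,G)` equals `6b(τ/2)²/((−G+√((G+L)²−2b))⁷ ((G+L)²−2b)^{3/2})` and is nonzero. -/
theorem manev_functional_determinant (b L G τ : ℝ) (hb : 0 < b) (hτ : 0 < τ)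
    (h1 : (G + L) ^ 2 > 2 * b) (hGL : 0 < G + L)
    (h2 : 0 < -G + Real.sqrt ((G + L) ^ 2 - 2 * b))
    (a11 a12 a21 a22 : ℝ)
    (h11 : HasDerivAt (fun L' => (τ / 2) * omegaL b L' G) a11 L)
    (h12 : HasDerivAt (fun G' => (τ / 2) * omegaL b L G') a12 G)
    (h21 : HasDerivAt (fun L' => (τ / 2) * omegaG b L' G) a21 L)
    (h22 : HasDerivAt (fun G' => (τ / 2) * omegaG b L G') a22 G) :
    a11 * a22 - a12 * a21
      = 6 * b * (τ / 2) ^ 2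
        / ((-G + Real.sqrt ((G + L) ^ 2 - 2 * b)) ^ 7
          * ((G + L) ^ 2 - 2 * b) ^ ((3 : ℝ) / 2)) ∧
    a11 * a22 - a12 * a21 ≠ 0 :=
  manev_functional_determinant_general b L G τ hb hτ h1 h2 a11 a12 a21 a22 h11 h12 h21 h22
end

section
/- The 4×4 matrix A = [[0, ω, 1, 0], [−ω, 0, 0, 1], [2ω² + 2b/a⁴, 0, 0, ω], [0, −ω², −ω, 0]], where ω, a, b > 0 satisfy ω²a⁴ = a + 2b, has eigenvalues 0 (with algebraic multiplicity two), i/a^{3/2}, and −i/a^{3/2}. -/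
open Matrix Polynomial

/-!
Using `ω²a⁴ = a + 2b`, the entry `2ω² + 2b/a⁴` equals `3ω² - 1/a³`. For the matrix with that
entry replaced by an arbitrary `c`, cofactor expansion gives the characteristic polynomial
`X⁴ + (3ω² - c) X²`, hence `X²(X² + 1/a³)` here; and `(i/a^{3/2})² = -1/a³` splits the quadratic
factor.
-/

def linearizationMatrix {R : Type*} [CommRing R] (ω c : R) : Matrix (Fin 4) (Fin 4) R :=
  !![0, ω, 1, 0;
     -ω, 0, 0, 1;
     c, 0, 0, ω;
     0, -ω ^ 2, -ω, 0]

theorem charmatrix_linearizationMatrix {R : Type*} [CommRing R] (ω c : R) :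
    charmatrix (linearizationMatrix ω c) =
      !![X, -C ω, -1, 0;
         C ω, X, 0, -1;
         -C c, 0, X, -C ω;
         0, C (ω ^ 2), C ω, X] := by
  ext i j
  fin_cases i <;> fin_cases j <;> simp [linearizationMatrix]

theorem charpoly_linearizationMatrix {R : Type*} [CommRing R] (ω c : R) :
    (linearizationMatrix ω c).charpoly = X ^ 4 + C (3 * ω ^ 2 - c) * X ^ 2 := by
  rw [Matrix.charpoly, charmatrix_linearizationMatrix, det_succ_row_zero, Fin.sum_univ_four]
  simp only [det_fin_three, submatrix_apply, of_apply, cons_val', cons_val_fin_one, Fin.succAbove,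
    Fin.isValue, Fin.reduceSucc, Fin.reduceCastSucc, Fin.reduceLT, ↓reduceIte, cons_val,
    Fin.val_zero, Fin.val_one, Fin.val_two, map_pow, map_sub, map_mul, map_ofNat]
  ring

theorem linearization_entry_eq {K : Type*} [Field K] {a b ω : K} (ha : a ≠ 0)
    (hrel : ω ^ 2 * a ^ 4 = a + 2 * b) :
    3 * ω ^ 2 - (2 * ω ^ 2 + 2 * b / a ^ 4) = 1 / a ^ 3 := by
  field_simp
  linear_combination hrel

theorem Complex.cpow_three_halves_sq (z : ℂ) : (z ^ ((3 : ℂ) / 2)) ^ 2 = z ^ 3 := by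
  rw [← Complex.cpow_nat_mul]
  norm_num

theorem X_sq_mul_sub_C_mul_add_C {R : Type*} [CommRing R] (z : R) :
    X ^ 2 * (X - C z) * (X + C z) = X ^ 4 - C (z ^ 2) * X ^ 2 := by
  rw [map_pow]
  ring

theorem linearization_eigenvalues_general (a b ω : ℝ) (ha : 0 < a)
    (hrel : ω ^ 2 * a ^ 4 = a + 2 * b) :
    let A : Matrix (Fin 4) (Fin 4) ℂ :=
      !![0, ω, 1, 0;
         -ω, 0, 0, 1;
         2 * ω ^ 2 + 2 * b / a ^ 4, 0, 0, ω;
         0, -(ω ^ 2 : ℂ), -ω, 0]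
    A.charpoly
      = X ^ 2 * (X - C (Complex.I / (a : ℂ) ^ ((3 : ℂ) / 2)))
          * (X + C (Complex.I / (a : ℂ) ^ ((3 : ℂ) / 2))) := by
  intro A
  have hentry : 3 * (ω : ℂ) ^ 2 - (2 * ω ^ 2 + 2 * b / a ^ 4) = 1 / (a : ℂ) ^ 3 :=
    linearization_entry_eq (by exact_mod_cast ha.ne') (by exact_mod_cast hrel)
  have hroot_sq : (Complex.I / (a : ℂ) ^ ((3 : ℂ) / 2)) ^ 2 = -(1 / (a : ℂ) ^ 3) := by
    rw [div_pow, Complex.I_sq, Complex.cpow_three_halves_sq, neg_div]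
  change (linearizationMatrix (ω : ℂ) _).charpoly = _
  rw [charpoly_linearizationMatrix, hentry, X_sq_mul_sub_C_mul_add_C, hroot_sq, map_neg,
    neg_mul, sub_neg_eq_add]

/-- The linearization matrix `A` around a circular Manev orbit, with
`ω²a⁴ = a + 2b`, has eigenvalues `0` (algebraic multiplicity two) and
`± i/a^{3/2}`: over ℂ its characteristic polynomial factors as
`X² (X − i/a^{3/2}) (X + i/a^{3/2})` (equivalently `X²(X² + 1/a³)`). -/
theorem linearization_eigenvalues (a b ω : ℝ) (ha : 0 < a) (hb : 0 < b)
    (hω : 0 < ω) (hrel : ω ^ 2 * a ^ 4 = a + 2 * b) :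
    let A : Matrix (Fin 4) (Fin 4) ℂ :=
      !![0, ω, 1, 0;
         -ω, 0, 0, 1;
         2 * ω ^ 2 + 2 * b / a ^ 4, 0, 0, ω;
         0, -(ω ^ 2 : ℂ), -ω, 0]
    A.charpoly
      = X ^ 2 * (X - C (Complex.I / (a : ℂ) ^ ((3 : ℂ) / 2)))
          * (X + C (Complex.I / (a : ℂ) ^ ((3 : ℂ) / 2))) :=
  linearization_eigenvalues_general a b ω ha hrel
end
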